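/- arXiv:1806.06097 — 4 statements merged into one kernel-verified Lean document; each statement's English description precedes it below -/
import Mathlib

section
/- Let F be an infinite field and let P ∈ F[X_1,...,X_N] be a polynomial of degree at most d expressed as P = C(Q_1,...,Q_t) for some C ∈ F[Y_1,...,Y_t] and polynomials Q_j ∈ F[X_1,...,X_N]. Then for every ℓ with 0 ≤ ℓ ≤ d, the degree-ℓ homogeneous component of P can be written as a sum of d+1 terms, the i-th of which is of the form C'_{ℓ,i}(Q'_{i1},...,Q'_{it}) where each Q'_{ij} is an F-scalar multiple of a scaled version of Q_j (namely Q_j with each variable X_m replaced by c_i·X_m for some c_i ∈ F); in particular each Q'_{ij} has degree at most deg(Q_j), and for each i the algebraic rank of {Q'_{ij} : j ∈ [t]} is at most the algebraic rank of {Q_j : j ∈ [t]}. -/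
/-! Substituting `X ↦ c • X` multiplies the degree-`k` component of `P` by `c ^ k`, so
`P(c • X) = ∑ k ≤ d, c ^ k • h^k[P]`. Evaluating at `d + 1` distinct scalars `c_i` gives a
Vandermonde system whose inverse recovers `h^ℓ[P]` as `∑ i, w_i • P(c_i • X)`, and
`w_i • P(c_i • X) = (C w_i * C)(Q_1(c_i • X), …, Q_t(c_i • X))`. The substitution is an algebra
endomorphism that does not raise degrees and preserves algebraic relations. -/

open MvPolynomial

/-- A family of polynomials is algebraically dependent over `F`. -/
def AlgDep (F : Type*) [Field F] {N : ℕ} {ι : Type*}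
    (Q : ι → MvPolynomial (Fin N) F) : Prop :=
  ∃ R : MvPolynomial ι F, R ≠ 0 ∧ MvPolynomial.aeval Q R = 0

/-- The algebraic rank of a family of polynomials is at most `k`:
every subfamily of size larger than `k` is algebraically dependent. -/
def AlgRankLE (F : Type*) [Field F] {N t : ℕ}
    (Q : Fin t → MvPolynomial (Fin N) F) (k : ℕ) : Prop :=
  ∀ S : Finset (Fin t), k < S.card → AlgDep F (fun j : S => Q j)

theorem Matrix.sum_vandermonde_inv_smul_sum_pow_smul {K M : Type*} [Field K] [AddCommGroup M]
    [Module K M] {n : ℕ} {c : Fin n → K} (hc : Function.Injective c) (v : Fin n → M)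
    (ℓ : Fin n) :
    ∑ i, (vandermonde c)⁻¹ ℓ i • ∑ k : Fin n, c i ^ (k : ℕ) • v k = v ℓ := by
  have hinv : (vandermonde c)⁻¹ * vandermonde c = 1 :=
    nonsing_inv_mul _ (det_vandermonde_ne_zero_iff.mpr hc).isUnit
  calc ∑ i, (vandermonde c)⁻¹ ℓ i • ∑ k : Fin n, c i ^ (k : ℕ) • v k
      = ∑ k, ((vandermonde c)⁻¹ * vandermonde c) ℓ k • v k := by
        simp_rw [Finset.smul_sum, smul_smul, mul_apply, vandermonde_apply, Finset.sum_smul]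
        exact Finset.sum_comm
    _ = v ℓ := by simp [hinv, one_apply, ite_smul]

namespace MvPolynomial

variable {R σ : Type*}

theorem aeval_smul_X_monomial [CommSemiring R] (c : R) (u : σ →₀ ℕ) (a : R) :
    aeval (fun i => c • (X i : MvPolynomial σ R)) (monomial u a) =
      c ^ u.degree • monomial u a := by
  rw [aeval_monomial, monomial_eq, Finsupp.degree_apply]
  simp only [smul_eq_C_mul, mul_pow, Finsupp.prod_mul, algebraMap_eq]
  rw [Finsupp.prod, Finset.prod_pow_eq_pow_sum, map_pow]
  ring

theorem IsHomogeneous.aeval_smul_X [CommSemiring R] (c : R) {p : MvPolynomial σ R} {n : ℕ}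
    (hp : p.IsHomogeneous n) :
    MvPolynomial.aeval (fun i => c • (X i : MvPolynomial σ R)) p = c ^ n • p := by
  conv_lhs => rw [p.as_sum]
  conv_rhs => rw [p.as_sum]
  rw [map_sum, Finset.smul_sum]
  refine Finset.sum_congr rfl fun u hu => ?_
  rw [aeval_smul_X_monomial, ← hp (mem_support_iff.mp hu), Finsupp.degree_eq_weight_one]
  rfl

theorem sum_homogeneousComponent_of_totalDegree_le [CommRing R] {p : MvPolynomial σ R}
    {D : ℕ} (hp : p.totalDegree ≤ D) :
    ∑ k ∈ Finset.range (D + 1), homogeneousComponent k p = p := by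
  rw [← Finset.sum_range_add_sum_Ico _ (by omega : p.totalDegree + 1 ≤ D + 1),
    sum_homogeneousComponent, add_eq_left]
  exact Finset.sum_eq_zero fun k hk =>
    homogeneousComponent_eq_zero k p (by simp at hk; omega)

theorem aeval_smul_X_eq_sum_homogeneousComponent [CommRing R] (c : R) {p : MvPolynomial σ R}
    {D : ℕ} (hp : p.totalDegree ≤ D) :
    aeval (fun i => c • (X i : MvPolynomial σ R)) p =
      ∑ k : Fin (D + 1), c ^ (k : ℕ) • homogeneousComponent k p := by
  conv_lhs => rw [← sum_homogeneousComponent_of_totalDegree_le hp]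
  rw [map_sum, ← Fin.sum_univ_eq_sum_range]
  exact Finset.sum_congr rfl fun k _ =>
    (homogeneousComponent_isHomogeneous k p).aeval_smul_X c

theorem totalDegree_aeval_smul_X_le [CommRing R] (c : R) (p : MvPolynomial σ R) :
    (aeval (fun i => c • (X i : MvPolynomial σ R)) p).totalDegree ≤ p.totalDegree := by
  rw [aeval_smul_X_eq_sum_homogeneousComponent c le_rfl]
  refine (totalDegree_finsetSum _ _).trans (Finset.sup_le fun k _ => ?_)
  exact (totalDegree_smul_le _ _).trans
    ((homogeneousComponent_isHomogeneous _ _).totalDegree_le.trans (by omega))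

theorem homogeneousComponent_eq_sum_smul_aeval_smul_X [Field R] {d ℓ : ℕ} (hℓ : ℓ ≤ d)
    {c : Fin (d + 1) → R} (hc : Function.Injective c) {p : MvPolynomial σ R}
    (hp : p.totalDegree ≤ d) :
    homogeneousComponent ℓ p = ∑ i, (Matrix.vandermonde c)⁻¹ ⟨ℓ, Nat.lt_succ_of_le hℓ⟩ i •
      aeval (fun m => c i • (X m : MvPolynomial σ R)) p := by
  simp_rw [aeval_smul_X_eq_sum_homogeneousComponent _ hp]
  rw [Matrix.sum_vandermonde_inv_smul_sum_pow_smul hc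
    (fun k : Fin (d + 1) => homogeneousComponent k p)]

end MvPolynomial

section AlgebraicRank

variable {F : Type*} [Field F] {N M : ℕ}

theorem AlgDep.map {ι : Type*} {Q : ι → MvPolynomial (Fin N) F} (h : AlgDep F Q)
    (φ : MvPolynomial (Fin N) F →ₐ[F] MvPolynomial (Fin M) F) :
    AlgDep F (fun j => φ (Q j)) := by
  obtain ⟨R, hR, hRQ⟩ := h
  exact ⟨R, hR, by rw [← comp_aeval_apply, hRQ, map_zero]⟩

theorem AlgRankLE.map {t k : ℕ} {Q : Fin t → MvPolynomial (Fin N) F} (h : AlgRankLE F Q k)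
    (φ : MvPolynomial (Fin N) F →ₐ[F] MvPolynomial (Fin M) F) :
    AlgRankLE F (fun j => φ (Q j)) k :=
  fun S hS => (h S hS).map φ

end AlgebraicRank

/-- Interpolation of homogeneous components: if `P = C(Q_1, …, Q_t)` has degree
at most `d`, then each homogeneous component `h^ℓ[P]` (for `0 ≤ ℓ ≤ d`) is a sum
of `d+1` terms, the `i`-th of which is a polynomial function `C'_{ℓ,i}` of the
polynomials `Q'_{ij} = s_{ij} • Q_j(c_i • X)`; in particular each `Q'_{ij}` has
degree at most `deg Q_j`, and for each `i` the algebraic rank of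
`{Q'_{ij} : j}` is at most the algebraic rank of `{Q_j : j}`. -/
theorem homogeneousComponent_of_composition {F : Type*} [Field F] [Infinite F]
    {N t d : ℕ} (P : MvPolynomial (Fin N) F) (C : MvPolynomial (Fin t) F)
    (Q : Fin t → MvPolynomial (Fin N) F)
    (hP : P = MvPolynomial.aeval Q C) (hdeg : P.totalDegree ≤ d) :
    ∀ ℓ ≤ d, ∃ c : Fin (d + 1) → F, ∃ s : Fin (d + 1) → Fin t → F,
      ∃ C' : Fin (d + 1) → MvPolynomial (Fin t) F,
      (MvPolynomial.homogeneousComponent ℓ P =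
          ∑ i : Fin (d + 1), MvPolynomial.aeval
            (fun j => s i j • MvPolynomial.aeval
              (fun m => c i • (MvPolynomial.X m : MvPolynomial (Fin N) F)) (Q j))
            (C' i)) ∧
      (∀ i : Fin (d + 1), ∀ j : Fin t,
          (s i j • MvPolynomial.aeval
            (fun m => c i • (MvPolynomial.X m : MvPolynomial (Fin N) F))
              (Q j)).totalDegree ≤ (Q j).totalDegree) ∧
      (∀ i : Fin (d + 1), ∀ k : ℕ, AlgRankLE F Q k →
          AlgRankLE F (fun j => s i j • MvPolynomial.aeval
            (fun m => c i • (MvPolynomial.X m : MvPolynomial (Fin N) F)) (Q j)) k) := by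
  intro ℓ hℓ
  let c : Fin (d + 1) → F := fun i => Infinite.natEmbedding F i
  have hc : Function.Injective c := (Infinite.natEmbedding F).injective.comp Fin.val_injective
  let w := (Matrix.vandermonde c)⁻¹ ⟨ℓ, Nat.lt_succ_of_le hℓ⟩
  refine ⟨c, fun _ _ => 1, fun i => MvPolynomial.C (w i) * C, ?_, fun i j => ?_,
    fun i k hk => ?_⟩
  · simp only [one_smul]
    rw [homogeneousComponent_eq_sum_smul_aeval_smul_X hℓ hc hdeg]
    refine Finset.sum_congr rfl fun i _ => ?_
    rw [map_mul, aeval_C, algebraMap_eq, ← smul_eq_C_mul, hP, comp_aeval_apply]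
  · rw [one_smul]
    exact totalDegree_aeval_smul_X_le _ _
  · simpa only [one_smul] using hk.map (aeval fun m => c i • X m)
end

section
/- Let F be a field of characteristic zero, and let P ∈ F[X_1,...,X_N,Y] be a nonzero polynomial of Y-degree at most k, written as P = Σ_{i=0}^{k} C_i(X_1,...,X_N)·Y^i. Suppose f ∈ F[X_1,...,X_N] satisfies P(X_1,...,X_N,f) = 0 and (∂P/∂Y)(0,...,0,f(0,...,0)) ≠ 0. Then for every t ≥ 0 there exists a polynomial R_t ∈ F[Z_1,...,Z_{k+1}] of degree at most t such that h^{≤t}[f] = h^{≤t}[R_t(C_0, C_1, ..., C_k)], where h^{≤t}[g] denotes the sum of homogeneous components of g of degree at most t. -/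
/-!
Let `c ≠ 0` be the constant term of `∂P/∂Y (f)` and `𝔪` the ideal of the variables. Starting from
the constant term of `f`, the chord iteration `g ↦ g - c⁻¹ P(g)` gains one power of `𝔪` in
`f - g` per step (Taylor expansion of `P` at `g`), and never leaves the subalgebra generated by
the coefficients `C_i`; so `f ≡ R(C_0, …, C_k) mod 𝔪^(t+1)` for some `R`. To bound the degree of
`R`, expand it around the constant terms `a_i` of the `C_i`: since `C_i - a_i ∈ 𝔪`, the monomials
of degree `> t` in `Z - a` contribute only to `𝔪^(t+1)` and can be discarded.
-/

open MvPolynomial Polynomial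

namespace Polynomial

variable {A : Type*} [CommRing A]

theorem eval_mem_of_coeff_mem {S : Subring A} {P : A[X]} (hP : ∀ i, P.coeff i ∈ S) {x : A}
    (hx : x ∈ S) : P.eval x ∈ S := by
  rw [eval_eq_sum_range]
  exact sum_mem fun i _ => mul_mem (hP i) (pow_mem hx i)

theorem exists_mem_sub_mem_pow_of_eval_eq_zero {I : Ideal A} {S : Subring A} {P : A[X]}
    (hP : ∀ i, P.coeff i ∈ S) {f : A} (hf : P.eval f = 0) {u : A} (hu : u ∈ S)
    (hfu : u * P.derivative.eval f - 1 ∈ I) (h₀ : ∃ g ∈ S, f - g ∈ I) (n : ℕ) :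
    ∃ g ∈ S, f - g ∈ I ^ (n + 1) := by
  induction n with
  | zero => simpa using h₀
  | succ n ih =>
    obtain ⟨g, hgS, hfg⟩ := ih
    refine ⟨g - u * P.eval g, sub_mem hgS (mul_mem hu (eval_mem_of_coeff_mem hP hgS)), ?_⟩
    set e := f - g
    have he : e ∈ I := Ideal.pow_le_self n.succ_ne_zero hfg
    have hgu : u * P.derivative.eval g - 1 ∈ I := by
      obtain ⟨r, hr⟩ := sub_dvd_eval_sub f g P.derivative
      have h : u * P.derivative.eval g - 1 = (u * P.derivative.eval f - 1) - u * r * e := by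
        rw [mul_assoc, mul_comm r, ← hr]; ring
      rw [h]
      exact sub_mem hfu (Ideal.mul_mem_left _ _ he)
    obtain ⟨q, hq⟩ := binomExpansion P g e
    rw [add_sub_cancel, hf] at hq
    have key : f - (g - u * P.eval g) = -((u * P.derivative.eval g - 1) * e) - u * q * e ^ 2 := by
      linear_combination -u * hq
    rw [key]
    refine sub_mem (neg_mem ?_) (Ideal.mul_mem_left _ _ ?_)
    · rw [pow_succ']
      exact Ideal.mul_mem_mul hgu hfg
    · have he2 := Ideal.pow_mem_pow hfg 2
      rw [← pow_mul] at he2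
      exact Ideal.pow_le_pow_right (by omega) he2

end Polynomial

namespace MvPolynomial

variable {σ R : Type*}

section CommSemiring

variable [CommSemiring R]

theorem coeff_sum_homogeneousComponent_range (p : MvPolynomial σ R) (t : ℕ) (d : σ →₀ ℕ) :
    coeff d (∑ j ∈ Finset.range (t + 1), homogeneousComponent j p) =
      if d.degree ≤ t then coeff d p else 0 := by
  simp [coeff_sum, coeff_homogeneousComponent]

theorem totalDegree_sum_homogeneousComponent_range_le (p : MvPolynomial σ R) (t : ℕ) :
    (∑ j ∈ Finset.range (t + 1), homogeneousComponent j p).totalDegree ≤ t :=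
  (totalDegree_finsetSum _ _).trans <| Finset.sup_le fun j hj =>
    (homogeneousComponent_isHomogeneous j p).totalDegree_le.trans
      (Nat.lt_succ_iff.mp (Finset.mem_range.mp hj))

theorem totalDegree_aeval_le {ι : Type*} {g : ι → MvPolynomial σ R}
    (hg : ∀ i, (g i).totalDegree ≤ 1) (q : MvPolynomial ι R) :
    (aeval g q).totalDegree ≤ q.totalDegree := by
  classical
  conv_lhs => rw [q.as_sum, map_sum]
  refine (totalDegree_finsetSum _ _).trans (Finset.sup_le fun d hd => ?_)
  rw [aeval_monomial, algebraMap_eq, C_mul']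
  refine (totalDegree_smul_le _ _).trans ?_
  calc (d.prod fun i m => g i ^ m).totalDegree
      ≤ ∑ i ∈ d.support, (g i ^ d i).totalDegree := totalDegree_finsetProd _ _
    _ ≤ ∑ i ∈ d.support, d i := Finset.sum_le_sum fun i _ =>
        (totalDegree_pow _ _).trans (by simpa using Nat.mul_le_mul_left (d i) (hg i))
    _ ≤ q.totalDegree := le_totalDegree hd

theorem aeval_mem_pow_of_mem_pow_idealOfVars {A : Type*} [CommSemiring A] [Algebra R A]
    {I : Ideal A} {x : σ → A} (hx : ∀ i, x i ∈ I) {p : MvPolynomial σ R} {n : ℕ}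
    (hp : p ∈ idealOfVars σ R ^ n) : aeval x p ∈ I ^ n := by
  have h := Ideal.mem_map_of_mem (aeval x) hp
  rw [Ideal.map_pow, Ideal.map_span, ← Set.range_comp] at h
  exact Ideal.pow_right_mono (Ideal.span_le.2 (Set.range_subset_iff.2 (by simpa using hx))) n h

end CommSemiring

section CommRing

variable [CommRing R]

theorem sub_C_constantCoeff_mem_idealOfVars (p : MvPolynomial σ R) :
    p - C (constantCoeff p) ∈ idealOfVars σ R := by
  rw [← pow_one (idealOfVars σ R), mem_pow_idealOfVars_iff']
  intro d hd
  simp [(Finsupp.degree_eq_zero_iff d).mp (Nat.lt_one_iff.mp hd), constantCoeff_eq]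

theorem sum_homogeneousComponent_range_eq_iff {p q : MvPolynomial σ R} {t : ℕ} :
    ∑ j ∈ Finset.range (t + 1), homogeneousComponent j p =
        ∑ j ∈ Finset.range (t + 1), homogeneousComponent j q ↔
      p - q ∈ idealOfVars σ R ^ (t + 1) := by
  simp only [mem_pow_idealOfVars_iff', Nat.lt_succ_iff, MvPolynomial.ext_iff,
    coeff_sum_homogeneousComponent_range, coeff_sub, sub_eq_zero]
  refine forall_congr' fun d => ?_
  split_ifs with h <;> simp [h]

theorem sub_sum_homogeneousComponent_range_mem (p : MvPolynomial σ R) (t : ℕ) :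
    p - ∑ j ∈ Finset.range (t + 1), homogeneousComponent j p ∈ idealOfVars σ R ^ (t + 1) := by
  rw [mem_pow_idealOfVars_iff']
  intro d hd
  simp [coeff_sum_homogeneousComponent_range, Nat.lt_succ_iff.mp hd]

theorem exists_totalDegree_le_aeval_sub_mem_pow {ι A : Type*} [CommRing A] [Algebra R A]
    {I : Ideal A} {x : ι → A} (a : ι → R) (hx : ∀ i, x i - algebraMap R A (a i) ∈ I)
    (p : MvPolynomial ι R) (t : ℕ) :
    ∃ q : MvPolynomial ι R, q.totalDegree ≤ t ∧ aeval x p - aeval x q ∈ I ^ (t + 1) := by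
  set y : ι → A := fun i => x i - algebraMap R A (a i)
  -- `p'(Z) = p(Z + a)` is evaluated at `y = x - a`, whose entries lie in `I`
  set p' := aeval (fun i => X i + C (a i)) p
  set low := ∑ j ∈ Finset.range (t + 1), homogeneousComponent j p'
  have hp' : aeval y p' = aeval x p := by
    rw [comp_aeval_apply]
    simp [y]
  have hlow : aeval x (aeval (fun i => X i - C (a i)) low) = aeval y low := by
    rw [comp_aeval_apply]
    simp [y]
  refine ⟨aeval (fun i => X i - C (a i)) low, ?_, ?_⟩
  · refine (totalDegree_aeval_le (fun i => ?_) low).trans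
      (totalDegree_sum_homogeneousComponent_range_le p' t)
    refine (totalDegree_sub _ _).trans ?_
    simp only [totalDegree_C, max_eq_left (Nat.zero_le _)]
    exact (totalDegree_monomial_le (Finsupp.single i 1) (1 : R)).trans_eq (by simp)
  · rw [hlow, ← hp', ← map_sub]
    exact aeval_mem_pow_of_mem_pow_idealOfVars hx (sub_sum_homogeneousComponent_range_mem p' t)

end CommRing

end MvPolynomial

theorem dvir_shpilka_yehudayoff_root_general {F : Type*} [Field F] {N k : ℕ}
    (P : Polynomial (MvPolynomial (Fin N) F)) (hdeg : P.natDegree ≤ k)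
    (f : MvPolynomial (Fin N) F) (hroot : Polynomial.eval f P = 0)
    (hderiv : Polynomial.eval (MvPolynomial.eval (fun _ : Fin N => (0 : F)) f)
        (Polynomial.map (MvPolynomial.eval (fun _ : Fin N => (0 : F)))
          (Polynomial.derivative P)) ≠ 0) :
    ∀ t : ℕ, ∃ R : MvPolynomial (Fin (k + 1)) F, R.totalDegree ≤ t ∧
      (∑ j ∈ Finset.range (t + 1), MvPolynomial.homogeneousComponent j f) =
        ∑ j ∈ Finset.range (t + 1), MvPolynomial.homogeneousComponent j
          (MvPolynomial.aeval (fun i : Fin (k + 1) => P.coeff i) R) := by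
  intro t
  set C' : Fin (k + 1) → MvPolynomial (Fin N) F := fun i => P.coeff i
  set S := (Algebra.adjoin F (Set.range C')).toSubring
  have hPS : ∀ i, P.coeff i ∈ S := by
    intro i
    rcases le_or_gt i k with hi | hi
    · exact Algebra.subset_adjoin ⟨⟨i, Nat.lt_succ_of_le hi⟩, rfl⟩
    · rw [coeff_eq_zero_of_natDegree_lt (hdeg.trans_lt hi)]
      exact zero_mem S
  set c := MvPolynomial.constantCoeff (P.derivative.eval f)
  have hc : c ≠ 0 := by
    rwa [eval_zero', eval_map_apply] at hderiv
  have hfu : MvPolynomial.C c⁻¹ * P.derivative.eval f - 1 ∈ idealOfVars (Fin N) F := by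
    have h : MvPolynomial.C c⁻¹ * P.derivative.eval f - 1 =
        MvPolynomial.C c⁻¹ * (P.derivative.eval f - MvPolynomial.C c) := by
      rw [mul_sub, ← MvPolynomial.C_mul, inv_mul_cancel₀ hc, MvPolynomial.C_1]
    exact h ▸ Ideal.mul_mem_left _ _ (sub_C_constantCoeff_mem_idealOfVars _)
  obtain ⟨g, hgS, hfg⟩ := exists_mem_sub_mem_pow_of_eval_eq_zero hPS hroot
    (Subalgebra.algebraMap_mem _ c⁻¹) hfu
    ⟨_, Subalgebra.algebraMap_mem _ _, sub_C_constantCoeff_mem_idealOfVars f⟩ t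
  obtain ⟨R, rfl⟩ : ∃ R, MvPolynomial.aeval (R := F) C' R = g := by
    rwa [← AlgHom.mem_range, ← Algebra.adjoin_range_eq_range_aeval]
  obtain ⟨R', hR'deg, hRR'⟩ := exists_totalDegree_le_aeval_sub_mem_pow _
    (fun i => sub_C_constantCoeff_mem_idealOfVars (C' i)) R t
  refine ⟨R', hR'deg, sum_homogeneousComponent_range_eq_iff.2 ?_⟩
  exact sub_add_sub_cancel f _ _ ▸ add_mem hfg hRR'

/-- The Dvir–Shpilka–Yehudayoff root-expressibility lemma: if
`P = Σ_{i=0}^k C_i·Y^i` is nonzero of `Y`-degree at most `k`, `f` is a root of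
`P` in `Y`, and `∂P/∂Y` does not vanish at `(0, …, 0, f(0, …, 0))`, then for
every `t ≥ 0` there is a polynomial `R_t` in `k+1` variables of degree at most
`t` with `h^{≤t}[f] = h^{≤t}[R_t(C_0, …, C_k)]`. -/
theorem dvir_shpilka_yehudayoff_root {F : Type*} [Field F] [CharZero F] {N k : ℕ}
    (P : Polynomial (MvPolynomial (Fin N) F)) (hP : P ≠ 0) (hdeg : P.natDegree ≤ k)
    (f : MvPolynomial (Fin N) F) (hroot : Polynomial.eval f P = 0)
    (hderiv : Polynomial.eval (MvPolynomial.eval (fun _ : Fin N => (0 : F)) f)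
        (Polynomial.map (MvPolynomial.eval (fun _ : Fin N => (0 : F)))
          (Polynomial.derivative P)) ≠ 0) :
    ∀ t : ℕ, ∃ R : MvPolynomial (Fin (k + 1)) F, R.totalDegree ≤ t ∧
      (∑ j ∈ Finset.range (t + 1), MvPolynomial.homogeneousComponent j f) =
        ∑ j ∈ Finset.range (t + 1), MvPolynomial.homogeneousComponent j
          (MvPolynomial.aeval (fun i : Fin (k + 1) => P.coeff i) R) :=
  dvir_shpilka_yehudayoff_root_general P hdeg f hroot hderiv
end

section
/- Let F be a field of characteristic zero, and let Q = {Q_1,...,Q_t} ⊆ F[X_1,...,X_N] have algebraic rank k with B = {Q_1,...,Q_k} a maximal algebraically independent subset. Then there exists a ∈ F^N and polynomials F_{k+1},...,F_t in k variables such that for all i ∈ {k+1,...,t}, Q_i(X + a) = h^{≤ d_i}[ F_i(Q_1(X+a), ..., Q_k(X+a)) ], where d_i = deg(Q_i) and h^{≤d}[g] denotes the truncation of g to homogeneous components of degree at most d. -/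
/-!
For each `Q_i` pick an annihilating polynomial `B_i` over `F[Q_1, …, Q_k]` of minimal degree in
the new variable; in characteristic zero its derivative does not annihilate `Q_i`. Translating by
a point `a` at which every `B_i'(Q_i)` is non-zero makes these derivatives invertible modulo the
ideal `(X_1, …, X_N)`, so Newton iteration approximates `Q_i(X + a)`, to any order in that ideal,
by polynomials in `Q_1(X + a), …, Q_k(X + a)`. Agreement to order `deg Q_i + 1` means agreement of
all homogeneous components of degree at most `deg Q_i`.
-/

open MvPolynomial

namespace Polynomial

theorem exists_eval₂_eq_zero_and_eval₂_derivative_ne_zero {A S : Type*} [CommRing A]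
    [IsAddTorsionFree A] [CommRing S] {φ : A →+* S} (hφ : Function.Injective φ) {x : S}
    {B : A[X]} (hB0 : B ≠ 0) (hB : B.eval₂ φ x = 0) :
    ∃ B : A[X], B.eval₂ φ x = 0 ∧ B.derivative.eval₂ φ x ≠ 0 := by
  induction hn : B.natDegree using Nat.strong_induction_on generalizing B with
  | _ n ih =>
    by_cases hB' : B.derivative.eval₂ φ x = 0
    · have hdeg : B.natDegree ≠ 0 := fun h => by
        rw [eq_C_of_natDegree_eq_zero h, eval₂_C, map_eq_zero_iff φ hφ] at hB
        exact hB0 (by rw [eq_C_of_natDegree_eq_zero h, hB, C_0])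
      exact ih _ (hn ▸ natDegree_derivative_lt hdeg) (derivative_ne_zero.mpr hdeg) hB' rfl
    · exact ⟨B, hB, hB'⟩

theorem exists_sub_map_mem_pow_of_eval₂_eq_zero {A S : Type*} [CommRing A] [CommRing S]
    (ψ : A →+* S) (I : Ideal S) {p : S} {B : A[X]} (hB : B.eval₂ ψ p = 0) {g₀ u : A}
    (hg₀ : p - ψ g₀ ∈ I) (hu : ψ u * B.derivative.eval₂ ψ p - 1 ∈ I) (n : ℕ) :
    ∃ g, p - ψ g ∈ I ^ (n + 1) := by
  -- Newton's method with the fixed approximate inverse `u` of `B'(p)`: the step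
  -- `g ↦ g - u B(g)` gains one order of `I`-adic precision.
  induction n with
  | zero => exact ⟨g₀, by rwa [zero_add, pow_one]⟩
  | succ n ih =>
    obtain ⟨g, hg⟩ := ih
    set e := p - ψ g
    obtain ⟨z, hz⟩ := binomExpansion (B.map ψ) (ψ g) e
    have htaylor : ψ (B.eval g) = -(ψ (B.derivative.eval g) * e) - z * e ^ 2 := by
      rw [add_sub_cancel, eval_map, hB, derivative_map, eval_map, eval_map, eval₂_hom,
        eval₂_hom] at hz
      linear_combination -hz
    have hD : ψ u * ψ (B.derivative.eval g) - 1 ∈ I := by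
      have hdvd := sub_dvd_eval_sub (ψ g) p (B.derivative.map ψ)
      rw [eval_map, eval_map, eval₂_hom] at hdvd
      have : ψ g - p ∈ I := by
        rw [← neg_sub]; exact neg_mem (Ideal.pow_le_self n.succ_ne_zero hg)
      convert add_mem hu (Ideal.mul_mem_left I (ψ u) (Ideal.mem_of_dvd _ hdvd this)) using 1
      ring
    refine ⟨g - u * B.eval g, ?_⟩
    have hstep : p - ψ (g - u * B.eval g) =
        -((ψ u * ψ (B.derivative.eval g) - 1) * e) - ψ u * z * e ^ 2 := by
      rw [map_sub, map_mul, htaylor]; ring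
    rw [hstep]
    refine sub_mem (neg_mem ?_) (Ideal.mul_mem_left _ _ ?_)
    · rw [pow_succ' I]; exact Ideal.mul_mem_mul hD hg
    · have he2 := Ideal.pow_mem_pow hg 2
      rw [← pow_mul] at he2
      exact Ideal.pow_le_pow_right (by omega) he2

end Polynomial

namespace MvPolynomial

section CommRing

variable {R σ : Type*} [CommRing R]

theorem mem_idealOfVars_iff_constantCoeff_eq_zero {p : MvPolynomial σ R} :
    p ∈ idealOfVars σ R ↔ constantCoeff p = 0 := by
  rw [← pow_one (idealOfVars σ R), mem_pow_idealOfVars_iff']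
  refine ⟨fun h => h 0 (by simp), fun h d hd => ?_⟩
  obtain rfl : d = 0 := (Finsupp.degree_eq_zero_iff d).mp (Nat.lt_one_iff.mp hd)
  exact h

theorem homogeneousComponent_eq_of_sub_mem_pow_idealOfVars {p q : MvPolynomial σ R} {n j : ℕ}
    (h : p - q ∈ idealOfVars σ R ^ n) (hj : j < n) :
    homogeneousComponent j p = homogeneousComponent j q := by
  rw [← sub_eq_zero, ← map_sub]
  ext d
  rw [coeff_homogeneousComponent, coeff_zero]
  split_ifs with hd
  · exact (mem_pow_idealOfVars_iff' n _).mp h d (hd ▸ hj)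
  · rfl

theorem sum_homogeneousComponent_eq_of_sub_mem_pow_idealOfVars {p q : MvPolynomial σ R}
    {n : ℕ} (h : p - q ∈ idealOfVars σ R ^ n) (hp : p.totalDegree < n) :
    ∑ j ∈ Finset.range n, homogeneousComponent j q = p := calc
  _ = ∑ j ∈ Finset.range n, homogeneousComponent j p := Finset.sum_congr rfl fun j hj =>
        (homogeneousComponent_eq_of_sub_mem_pow_idealOfVars h (Finset.mem_range.mp hj)).symm
  _ = ∑ j ∈ Finset.range (p.totalDegree + 1), homogeneousComponent j p :=
        (Finset.sum_subset (Finset.range_subset_range.mpr hp) fun j _ hj =>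
          homogeneousComponent_eq_zero j p (by simpa using hj)).symm
  _ = p := sum_homogeneousComponent p

theorem totalDegree_aeval_monomial_le {τ : Type*} {f : σ → MvPolynomial τ R}
    (hf : ∀ i, (f i).totalDegree ≤ 1) (d : σ →₀ ℕ) (c : R) :
    (aeval f (monomial d c)).totalDegree ≤ d.degree := by
  rw [aeval_monomial, algebraMap_eq, Finsupp.prod]
  refine (totalDegree_mul _ _).trans ?_
  rw [totalDegree_C, zero_add]
  refine (totalDegree_finsetProd _ _).trans <|
    Finset.sum_le_sum fun i _ => (totalDegree_pow _ _).trans ?_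
  simpa using Nat.mul_le_mul_left (d i) (hf i)

theorem totalDegree_aeval_le_s10 {τ : Type*} {f : σ → MvPolynomial τ R}
    (hf : ∀ i, (f i).totalDegree ≤ 1) (p : MvPolynomial σ R) :
    (aeval f p).totalDegree ≤ p.totalDegree := by
  conv_lhs => rw [p.as_sum, map_sum]
  refine (totalDegree_finsetSum _ _).trans (Finset.sup_le fun d hd => ?_)
  exact (totalDegree_aeval_monomial_le hf d _).trans (le_totalDegree hd)

theorem totalDegree_X_add_C_le (i : σ) (r : R) : (X i + C r : MvPolynomial σ R).totalDegree ≤ 1 :=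
  (totalDegree_add _ _).trans <| by
    simpa [totalDegree_C, X] using totalDegree_monomial_le (Finsupp.single i 1) (1 : R)

theorem constantCoeff_aeval_X_add_C (a : σ → R) (p : MvPolynomial σ R) :
    constantCoeff (aeval (fun i => X i + C (a i)) p) = eval a p := by
  induction p using MvPolynomial.induction_on with
  | C r => simp
  | add p q hp hq => simp only [map_add, hp, hq]
  | mul_X p i hp => simp only [map_mul, hp, aeval_X, map_add, constantCoeff_X, constantCoeff_C,
      eval_X, zero_add]

theorem eval₂_optionEquivLeft {S : Type*} [CommRing S] [Algebra R S] (f : σ → S) (x : S)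
    (A : MvPolynomial (Option σ) R) :
    (optionEquivLeft R σ A).eval₂ ↑(aeval (R := R) f) x =
      aeval (fun o => o.elim x f) A := by
  induction A using MvPolynomial.induction_on with
  | C r => simp [optionEquivLeft_C]
  | add p q hp hq => simp [hp, hq]
  | mul_X p o hp => cases o <;> simp [hp, optionEquivLeft_X_none, optionEquivLeft_X_some]

theorem exists_forall_eval_ne_zero [IsDomain R] [Infinite R] {ι : Type*} [Fintype ι]
    {f : ι → MvPolynomial σ R} (hf : ∀ i, f i ≠ 0) : ∃ a, ∀ i, eval a (f i) ≠ 0 := by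
  have hprod : ∏ i, f i ≠ 0 := Finset.prod_ne_zero_iff.mpr fun i _ => hf i
  obtain ⟨a, ha⟩ : ∃ a, eval a (∏ i, f i) ≠ 0 := by
    by_contra! h
    exact hprod (funext fun a => by simp [h a])
  rw [map_prod] at ha
  exact ⟨a, fun i => Finset.prod_ne_zero_iff.mp ha i (Finset.mem_univ i)⟩

end CommRing

theorem exists_sub_map_mem_pow_idealOfVars_of_eval₂_eq_zero {F A σ : Type*} [Field F]
    [CommRing A] [Algebra F A] (ψ : A →ₐ[F] MvPolynomial σ F) {p : MvPolynomial σ F}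
    {B : Polynomial A} (hB : B.eval₂ ψ p = 0)
    (hc : constantCoeff (B.derivative.eval₂ ψ p) ≠ 0) (n : ℕ) :
    ∃ g, p - ψ g ∈ idealOfVars σ F ^ (n + 1) := by
  refine Polynomial.exists_sub_map_mem_pow_of_eval₂_eq_zero (ψ : A →+* MvPolynomial σ F) _ hB
    (g₀ := algebraMap F A (constantCoeff p)) (u := algebraMap F A (constantCoeff
      (B.derivative.eval₂ ψ p))⁻¹) ?_ ?_ n <;>
  simp [mem_idealOfVars_iff_constantCoeff_eq_zero, hc]

end MvPolynomial

/-- From algebraic dependence to functional dependence: if `{Q_1, …, Q_t}` has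
algebraic rank `k` with maximal algebraically independent subset
`{Q_1, …, Q_k}`, then there is a translation `a ∈ F^N` and polynomials `F_i` in
`k` variables such that for every `i > k`,
`Q_i(X+a) = h^{≤ deg Q_i}[F_i(Q_1(X+a), …, Q_k(X+a))]`. -/
theorem algebraic_dependence_to_functional_dependence {F : Type*} [Field F]
    [CharZero F] {N t k : ℕ} (hk : k ≤ t) (Q : Fin t → MvPolynomial (Fin N) F)
    (hindep : ∀ R : MvPolynomial (Fin k) F,
      MvPolynomial.aeval (fun j : Fin k => Q (Fin.castLE hk j)) R = 0 → R = 0)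
    (hmax : ∀ i : Fin t, ∃ A : MvPolynomial (Option (Fin k)) F, A ≠ 0 ∧
      MvPolynomial.aeval (fun o : Option (Fin k) =>
        o.elim (Q i) (fun j => Q (Fin.castLE hk j))) A = 0) :
    ∃ a : Fin N → F, ∃ Fi : Fin t → MvPolynomial (Fin k) F,
      ∀ i : Fin t, k ≤ (i : ℕ) →
        MvPolynomial.aeval (fun m : Fin N =>
            MvPolynomial.X m + MvPolynomial.C (a m)) (Q i) =
          ∑ j ∈ Finset.range ((Q i).totalDegree + 1),
            MvPolynomial.homogeneousComponent j
              (MvPolynomial.aeval (fun l : Fin k =>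
                MvPolynomial.aeval (fun m : Fin N =>
                  MvPolynomial.X m + MvPolynomial.C (a m)) (Q (Fin.castLE hk l)))
                (Fi i)) := by
  set φ : MvPolynomial (Fin k) F →ₐ[F] MvPolynomial (Fin N) F :=
    aeval fun j => Q (Fin.castLE hk j)
  have hsep (i : Fin t) : ∃ B : Polynomial (MvPolynomial (Fin k) F),
      B.eval₂ φ (Q i) = 0 ∧ B.derivative.eval₂ φ (Q i) ≠ 0 := by
    obtain ⟨A, hA0, hA⟩ := hmax i
    exact Polynomial.exists_eval₂_eq_zero_and_eval₂_derivative_ne_zero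
      ((injective_iff_map_eq_zero φ).mpr hindep)
      ((map_ne_zero_iff _ (optionEquivLeft F (Fin k)).injective).mpr hA0)
      ((eval₂_optionEquivLeft _ _ A).trans hA)
  choose B hB hB' using hsep
  obtain ⟨a, ha⟩ := exists_forall_eval_ne_zero hB'
  set τ : MvPolynomial (Fin N) F →ₐ[F] MvPolynomial (Fin N) F := aeval fun m => X m + C (a m)
  have hτφ (x : MvPolynomial (Fin N) F) (P : Polynomial (MvPolynomial (Fin k) F)) :
      P.eval₂ (τ.comp φ) (τ x) = τ (P.eval₂ φ x) := by
    rw [AlgHom.comp_toRingHom]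
    exact (Polynomial.hom_eval₂ P _ _ x).symm
  have happrox (i : Fin t) : ∃ G, τ (Q i) - τ.comp φ G ∈
      idealOfVars (Fin N) F ^ ((Q i).totalDegree + 1) := by
    refine exists_sub_map_mem_pow_idealOfVars_of_eval₂_eq_zero (τ.comp φ) (B := B i) ?_ ?_ _
    · rw [hτφ, hB, map_zero]
    · rw [hτφ, constantCoeff_aeval_X_add_C]
      exact ha i
  choose G hG using happrox
  refine ⟨a, G, fun i _ => ?_⟩
  rw [← comp_aeval_apply]
  exact (sum_homogeneousComponent_eq_of_sub_mem_pow_idealOfVars (hG i)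
    (Nat.lt_succ_of_le (totalDegree_aeval_le_s10 (fun m => totalDegree_X_add_C_le m (a m)) _))).symm
end

section
/- Let P ∈ F[X_1,...,X_N] have degree at most d, let M be a set of monomials all of degree exactly r, and let m be a positive integer. Then for every 0 ≤ i ≤ d, Φ_{M,m}(P) ≥ Φ_{M,m}(h^i[P]), where h^i[P] is the degree-i homogeneous component of P. -/
open MvPolynomial

open MvPolynomial

/-- Derivative with respect to a monomial `μ`: apply `∂/∂X_i` exactly `μ i`
times for each `i`. -/
noncomputable def monDeriv {F : Type*} [CommSemiring F] {N : ℕ} (μ : Fin N → ℕ) :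
    Module.End F (MvPolynomial (Fin N) F) :=
  (List.ofFn (fun i : Fin N => ((MvPolynomial.pderiv i).toLinearMap ^ (μ i)))).prod

/-- Projection onto multilinear monomials: monomials with any exponent larger
than one are set to zero. -/
noncomputable def multProj {F : Type*} [CommSemiring F] {N : ℕ}
    (P : MvPolynomial (Fin N) F) : MvPolynomial (Fin N) F :=
  ∑ μ ∈ P.support.filter (fun μ => ∀ i, μ i ≤ 1),
    MvPolynomial.monomial μ (MvPolynomial.coeff μ P)

/-- The dimension of the space of `(M, m)`-projected shifted partial
derivatives of `P`. -/
noncomputable def phiMeasure {F : Type*} [Field F] {N : ℕ}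
    (M : Finset (Fin N → ℕ)) (m : ℕ) (P : MvPolynomial (Fin N) F) : ℕ :=
  Module.finrank F ↥(Submodule.span F
    { g : MvPolynomial (Fin N) F | ∃ μ ∈ M, ∃ S : Finset (Fin N), S.card = m ∧
        g = multProj ((∏ i ∈ S, MvPolynomial.X i) * (monDeriv μ P)) })

/-! Since every `μ ∈ M` has degree `r` and every shift has degree `m`, the linear map
`g ↦ mult[(∏_{i∈S} X_i) · ∂_μ g]` sends the degree-`(k + r)` component of `P` to the
degree-`(k + m)` component of the image of `P`, and kills the components of degree `< r`.
So the generators attached to `h^i[P]` are the images of those attached to `P` under one linear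
map (a homogeneous projection, or zero when `i < r`), and the span they generate has dimension
at most that of the span for `P`. -/

open Finset

namespace MvPolynomial

variable {σ R : Type*} [CommSemiring R]

def ShiftsDegree (L : Module.End R (MvPolynomial σ R)) (a b : ℕ) : Prop :=
  (∀ k Q, IsHomogeneous Q (k + a) → IsHomogeneous (L Q) (k + b)) ∧
    ∀ k < a, ∀ Q, IsHomogeneous Q k → L Q = 0

namespace ShiftsDegree

variable {L L' : Module.End R (MvPolynomial σ R)} {a b c : ℕ}

lemma of_isHomogeneous (h : ∀ k Q, IsHomogeneous Q k → IsHomogeneous (L Q) (k + b)) :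
    ShiftsDegree L 0 b :=
  ⟨h, fun _ hk => absurd hk (Nat.not_lt_zero _)⟩

lemma one : ShiftsDegree (1 : Module.End R (MvPolynomial σ R)) 0 0 :=
  of_isHomogeneous fun _ _ h => h

lemma mul (hL : ShiftsDegree L b c) (hL' : ShiftsDegree L' a 0) :
    ShiftsDegree (L * L') (a + b) c := by
  refine ⟨fun k Q hQ => hL.1 k _ ?_, fun k hk Q hQ => ?_⟩
  · exact hL'.1 (k + b) Q (by rwa [← add_assoc, add_right_comm] at hQ)
  · rw [Module.End.mul_apply]
    by_cases hka : k < a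
    · rw [hL'.2 k hka Q hQ, map_zero]
    · obtain ⟨j, rfl⟩ := Nat.exists_eq_add_of_le (not_lt.mp hka)
      exact hL.2 j (by omega) _ (hL'.1 j Q (by rwa [add_comm] at hQ))

lemma pow (hL : ShiftsDegree L a 0) (n : ℕ) : ShiftsDegree (L ^ n) (n * a) 0 := by
  induction n with
  | zero => simpa using one
  | succ n ih => simpa [pow_succ, add_mul, add_comm] using ih.mul hL

lemma list_prod {ι : Type*} (l : List ι) {L : ι → Module.End R (MvPolynomial σ R)}
    {a : ι → ℕ} (h : ∀ i ∈ l, ShiftsDegree (L i) (a i) 0) :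
    ShiftsDegree (l.map L).prod (l.map a).sum 0 := by
  induction l with
  | nil => simpa using one
  | cons i l ih =>
    simpa [add_comm] using
      (h i List.mem_cons_self).mul (ih fun j hj => h j (List.mem_cons_of_mem i hj))

lemma homogeneousComponent_apply (hL : ShiftsDegree L a b) (P : MvPolynomial σ R) (k : ℕ) :
    homogeneousComponent (k + b) (L P) = L (homogeneousComponent (k + a) P) := by
  classical
  conv_lhs => rw [← sum_homogeneousComponent P, map_sum, map_sum]
  rw [Finset.sum_eq_single (k + a)]
  · exact homogeneousComponent_eq_self (hL.1 k _ (homogeneousComponent_isHomogeneous _ _))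
  · intro j _ hj
    by_cases hja : j < a
    · rw [hL.2 j hja _ (homogeneousComponent_isHomogeneous _ _), map_zero]
    · obtain ⟨j, rfl⟩ := Nat.exists_eq_add_of_le (not_lt.mp hja)
      rw [homogeneousComponent_of_mem (hL.1 j _ (by
        rw [add_comm]; exact homogeneousComponent_isHomogeneous _ _)), if_neg (by omega)]
  · intro hk
    rw [homogeneousComponent_eq_zero _ P (by simpa using hk), map_zero, map_zero]

end ShiftsDegree

lemma shiftsDegree_pderiv (i : σ) :
    ShiftsDegree ((pderiv i).toLinearMap : Module.End R (MvPolynomial σ R)) 1 0 := by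
  refine ⟨fun k Q hQ => by simpa using hQ.pderiv (i := i), fun k hk Q hQ => ?_⟩
  obtain rfl : k = 0 := by omega
  rw [← totalDegree_zero_iff_isHomogeneous, totalDegree_eq_zero_iff_eq_C] at hQ
  rw [hQ]
  exact pderiv_C

variable {N : ℕ}

lemma shiftsDegree_monDeriv (μ : Fin N → ℕ) :
    ShiftsDegree (monDeriv (F := R) μ) (∑ i, μ i) 0 := by
  have := ShiftsDegree.list_prod (List.finRange N) (R := R)
    (L := fun i => (pderiv i).toLinearMap ^ μ i)
    (a := fun i => μ i * 1) fun i _ => (shiftsDegree_pderiv i).pow (μ i)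
  simpa [monDeriv, List.ofFn_eq_map, ← List.sum_ofFn] using this

lemma coeff_multProj (P : MvPolynomial (Fin N) R) (ν : Fin N →₀ ℕ) :
    coeff ν (multProj P) = if ∀ i, ν i ≤ 1 then coeff ν P else 0 := by
  classical
  rw [multProj, coeff_sum]
  simp only [coeff_monomial]
  rw [Finset.sum_ite_eq']
  by_cases hν : coeff ν P = 0 <;> simp [hν]

noncomputable def multProjₗ : Module.End R (MvPolynomial (Fin N) R) where
  toFun := multProj
  map_add' P Q := by
    ext ν
    simp only [coeff_multProj, coeff_add]
    split_ifs <;> simp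
  map_smul' c P := by
    ext ν
    simp only [coeff_multProj, coeff_smul, RingHom.id_apply]
    split_ifs <;> simp

lemma IsHomogeneous.multProj {P : MvPolynomial (Fin N) R} {n : ℕ} (h : P.IsHomogeneous n) :
    (multProj P).IsHomogeneous n := fun ν hν => h fun hP => hν (by simp [coeff_multProj, hP])

lemma isHomogeneous_prod_X (S : Finset σ) :
    IsHomogeneous (∏ i ∈ S, (X i : MvPolynomial σ R)) #S := by
  simpa using IsHomogeneous.prod S (fun i => (X i : MvPolynomial σ R)) (fun _ => 1)
    fun i _ => isHomogeneous_X R i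

noncomputable def projShiftedPartial (μ : Fin N → ℕ) (S : Finset (Fin N)) :
    Module.End R (MvPolynomial (Fin N) R) :=
  multProjₗ * LinearMap.mulLeft R (∏ i ∈ S, X i) * monDeriv μ

lemma shiftsDegree_projShiftedPartial (μ : Fin N → ℕ) (S : Finset (Fin N)) :
    ShiftsDegree (projShiftedPartial (R := R) μ S) (∑ i, μ i) #S := by
  have hmul : ShiftsDegree (multProjₗ * LinearMap.mulLeft R (∏ i ∈ S, X i)) 0 #S :=
    .of_isHomogeneous fun k _ hQ => by
      rw [add_comm]
      exact ((isHomogeneous_prod_X S).mul hQ).multProj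
  exact hmul.mul (shiftsDegree_monDeriv μ)

end MvPolynomial

lemma phiMeasure_le_of_eq_map {F : Type*} [Field F] {N : ℕ} (M : Finset (Fin N → ℕ)) (m : ℕ)
    {P Q : MvPolynomial (Fin N) F} (f : Module.End F (MvPolynomial (Fin N) F))
    (h : ∀ μ ∈ M, ∀ S : Finset (Fin N), #S = m →
      projShiftedPartial μ S Q = f (projShiftedPartial μ S P)) :
    phiMeasure M m Q ≤ phiMeasure M m P := by
  set A := {g | ∃ μ ∈ M, ∃ S : Finset (Fin N), #S = m ∧ g = projShiftedPartial μ S P}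
  have hA : A.Finite := (Set.finite_range fun p : M × Finset (Fin N) =>
    projShiftedPartial p.1 p.2 P).subset (by rintro _ ⟨μ, hμ, S, -, rfl⟩; exact ⟨(⟨μ, hμ⟩, S), rfl⟩)
  have : Module.Finite F (Submodule.span F A) := FiniteDimensional.span_of_finite F hA
  have hle : Submodule.span F {g | ∃ μ ∈ M, ∃ S : Finset (Fin N), #S = m ∧
      g = projShiftedPartial μ S Q} ≤ (Submodule.span F A).map f := by
    rw [Submodule.span_le]
    rintro _ ⟨μ, hμ, S, hS, rfl⟩
    exact ⟨_, Submodule.subset_span ⟨μ, hμ, S, hS, rfl⟩, (h μ hμ S hS).symm⟩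
  exact (Submodule.finrank_mono hle).trans (Submodule.finrank_map_le f _)

theorem phiMeasure_homogeneousComponent_le_general {F : Type*} [Field F] {N : ℕ}
    (M : Finset (Fin N → ℕ)) (m r d : ℕ)
    (hM : ∀ μ ∈ M, ∑ i, μ i = r)
    (P : MvPolynomial (Fin N) F) :
    ∀ i ≤ d, phiMeasure M m (MvPolynomial.homogeneousComponent i P) ≤
      phiMeasure M m P := by
  intro i _
  have hshift : ∀ μ ∈ M, ∀ S : Finset (Fin N), #S = m →
      ShiftsDegree (projShiftedPartial (R := F) μ S) r m := fun μ hμ S hS =>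
    hS ▸ hM μ hμ ▸ shiftsDegree_projShiftedPartial μ S
  by_cases hir : i < r
  · refine phiMeasure_le_of_eq_map M m 0 fun μ hμ S hS => ?_
    exact (hshift μ hμ S hS).2 i hir _ (homogeneousComponent_isHomogeneous i P)
  · obtain ⟨k, rfl⟩ := Nat.exists_eq_add_of_le (not_lt.mp hir)
    refine phiMeasure_le_of_eq_map M m (homogeneousComponent (k + m)) fun μ hμ S hS => ?_
    rw [(hshift μ hμ S hS).homogeneousComponent_apply, add_comm]

/-- If all monomials in `M` have degree exactly `r`, then the projected shifted
partial derivative measure of `P` dominates that of each of its homogeneous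
components. -/
theorem phiMeasure_homogeneousComponent_le {F : Type*} [Field F] {N : ℕ}
    (M : Finset (Fin N → ℕ)) (m r d : ℕ) (hm : 0 < m)
    (hM : ∀ μ ∈ M, ∑ i, μ i = r)
    (P : MvPolynomial (Fin N) F) (hP : P.totalDegree ≤ d) :
    ∀ i ≤ d, phiMeasure M m (MvPolynomial.homogeneousComponent i P) ≤
      phiMeasure M m P :=
  phiMeasure_homogeneousComponent_le_general M m r d hM P
end
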